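/- Every isotropy subgroup of the SE(3)-action on the two-body phase space M is of one of four types: for every (q,p) ∈ M, the isotropy subgroup SE(3)_{(q,p)} equals G¹(x) for some x ∈ ℝ³, or G²(y) for some y ∈ ℝ³ with y ≠ 0, or G³(x,y) for some x,y ∈ ℝ³ with x×y ≠ 0, or the trivial group G⁴ = {(I,0)}. -/

import Mathlib

open Matrix

/-- Vectors in ℝ³. -/
abbrev V3 : Type := Fin 3 → ℝ

/-- The two-body phase space M = ℝ³ × ℝ³ × ℝ³ × ℝ³, points (q¹, q², p¹, p²). -/
abbrev M2B : Type := V3 × V3 × V3 × V3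

/-- A 3×3 real matrix is special orthogonal. -/
def SO3 (A : Matrix (Fin 3) (Fin 3) ℝ) : Prop := Aᵀ * A = 1 ∧ A.det = 1

/-- The action of (A, a) ∈ SE(3) on the phase space:
(A,a)·(q¹,q²,p¹,p²) = (Aq¹+a, Aq²+a, Ap¹, Ap²). -/
def act (A : Matrix (Fin 3) (Fin 3) ℝ) (a : V3) (m : M2B) : M2B :=
  (A *ᵥ m.1 + a, A *ᵥ m.2.1 + a, A *ᵥ m.2.2.1, A *ᵥ m.2.2.2)

/-- The isotropy subgroup SE(3)_{(q,p)} of a point of M, as a set of pairs (A,a)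
with A special orthogonal. -/
def isotropy (m : M2B) : Set (Matrix (Fin 3) (Fin 3) ℝ × V3) :=
  {g | SO3 g.1 ∧ act g.1 g.2 m = m}

/-- The momentum map J(q¹,q²,p¹,p²) = (q¹×p¹ + q²×p², p¹+p²). -/
def Jmom (m : M2B) : V3 × V3 :=
  (m.1 ⨯₃ m.2.2.1 + m.2.1 ⨯₃ m.2.2.2, m.2.2.1 + m.2.2.2)

/-- G¹(x) = {(A,a) ∈ SE(3) : a = x − Ax}. -/
def G1 (x : V3) : Set (Matrix (Fin 3) (Fin 3) ℝ × V3) :=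
  {g | SO3 g.1 ∧ g.2 = x - g.1 *ᵥ x}

/-- G²(y) = {(A,0) ∈ SE(3) : Ay = y}. -/
def G2 (y : V3) : Set (Matrix (Fin 3) (Fin 3) ℝ × V3) :=
  {g | SO3 g.1 ∧ g.1 *ᵥ y = y ∧ g.2 = 0}

/-- G³(x,y) = {(A,a) ∈ SE(3) : Ay = y and a = x − Ax}. -/
def G3 (x y : V3) : Set (Matrix (Fin 3) (Fin 3) ℝ × V3) :=
  {g | SO3 g.1 ∧ g.1 *ᵥ y = y ∧ g.2 = x - g.1 *ᵥ x}

/-- G⁴ = {(I, 0)}, the trivial subgroup. -/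
def G4 : Set (Matrix (Fin 3) (Fin 3) ℝ × V3) := {((1 : Matrix (Fin 3) (Fin 3) ℝ), (0 : V3))}

/-!
A rigid motion (A, a) fixes (q¹, q², p¹, p²) exactly when A fixes p¹, p² and q² − q¹ and
a = q¹ − A q¹, so the isotropy group is determined by the point q¹ and the subspace W spanned
by p¹, p², q² − q¹. If W = 0 it is G¹(q¹); if W is a line ℝy it is G³(q¹, y), which collapses
to G²(y) when q¹ lies on that line; otherwise W contains two non-parallel vectors, and a
rotation fixing both also fixes their cross product, hence a basis, so it is the identity and
the group is G⁴.
-/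

theorem Matrix.transpose_mulVec_cross_mulVec (A : Matrix (Fin 3) (Fin 3) ℝ) (u v : V3) :
    Aᵀ *ᵥ ((A *ᵥ u) ⨯₃ (A *ᵥ v)) = A.det • (u ⨯₃ v) := by
  ext i
  fin_cases i <;>
    simp [cross_apply, mulVec, dotProduct, Fin.sum_univ_three, det_fin_three] <;> ring

lemma mem_span_singleton_of_cross_eq_zero {F : Type*} [Field F] {y u : Fin 3 → F}
    (hy : y ≠ 0) (h : y ⨯₃ u = 0) : u ∈ F ∙ y := by
  by_contra hu
  refine crossProduct_ne_zero_iff_linearIndependent.mpr ?_ h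
  exact (LinearIndependent.pair_iff' hy).mpr fun a ha =>
    hu (Submodule.mem_span_singleton.mpr ⟨a, ha⟩)

namespace SO3

variable {A : Matrix (Fin 3) (Fin 3) ℝ}

theorem mulVec_cross (hA : SO3 A) (u v : V3) :
    A *ᵥ (u ⨯₃ v) = (A *ᵥ u) ⨯₃ (A *ᵥ v) := by
  have hAAt : A * Aᵀ = 1 := mul_eq_one_comm.mp hA.1
  rw [← one_smul ℝ (u ⨯₃ v), ← hA.2, ← A.transpose_mulVec_cross_mulVec, mulVec_mulVec, hAAt,
    one_mulVec]

theorem eq_one_of_mulVec_eq_self (hA : SO3 A) {u v : V3} (hu : A *ᵥ u = u) (hv : A *ᵥ v = v)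
    (huv : u ⨯₃ v ≠ 0) : A = 1 := by
  let B : Matrix (Fin 3) (Fin 3) ℝ := ![u, v, u ⨯₃ v]
  have hB : IsUnit B.det := by
    rw [isUnit_iff_ne_zero, ← triple_product_eq_det, triple_product_permutation,
      triple_product_permutation]
    exact fun h => huv (dotProduct_self_eq_zero.mp h)
  have hBA : B * Aᵀ = B * 1 := by
    rw [mul_one]
    funext i
    rw [mul_apply_eq_vecMul, vecMul_transpose]
    fin_cases i
    · exact hu
    · exact hv
    · exact (hA.mulVec_cross u v).trans (by rw [hu, hv]; rfl)
  simpa using congrArg transpose ((B.isUnit_iff_isUnit_det.mpr hB).mul_left_cancel hBA)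

end SO3

lemma Submodule.eq_bot_or_eq_span_singleton_or_exists_cross_ne_zero {F : Type*} [Field F]
    (W : Submodule F (Fin 3 → F)) :
    W = ⊥ ∨ (∃ y ≠ 0, W = F ∙ y) ∨ ∃ u ∈ W, ∃ v ∈ W, u ⨯₃ v ≠ 0 := by
  by_cases hW : W = ⊥
  · exact Or.inl hW
  obtain ⟨y, hyW, hy⟩ := Submodule.ne_bot_iff W |>.mp hW
  by_cases hline : ∀ v ∈ W, y ⨯₃ v = 0
  · refine Or.inr (Or.inl ⟨y, hy, le_antisymm (fun v hv => ?_) ?_⟩)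
    · exact mem_span_singleton_of_cross_eq_zero hy (hline v hv)
    · exact (Submodule.span_singleton_le_iff_mem y W).mpr hyW
  · obtain ⟨v, hvW, hyv⟩ := not_forall₂.mp hline
    exact Or.inr (Or.inr ⟨y, hyW, v, hvW, hyv⟩)

lemma forall_mem_span_mulVec_eq_self {A : Matrix (Fin 3) (Fin 3) ℝ} {s : Set V3} :
    (∀ w ∈ Submodule.span ℝ s, A *ᵥ w = w) ↔ ∀ w ∈ s, A *ᵥ w = w := by
  refine ⟨fun h w hw => h w (Submodule.subset_span hw), fun h w hw => ?_⟩
  induction hw using Submodule.span_induction with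
  | mem w hw => exact h w hw
  | zero => exact mulVec_zero A
  | add w w' _ _ hw hw' => rw [mulVec_add, hw, hw']
  | smul c w _ hw => rw [mulVec_smul, hw]

def fixingRotations (x : V3) (W : Submodule ℝ V3) : Set (Matrix (Fin 3) (Fin 3) ℝ × V3) :=
  {g | SO3 g.1 ∧ (∀ w ∈ W, g.1 *ᵥ w = w) ∧ g.2 = x - g.1 *ᵥ x}

lemma isotropy_eq_fixingRotations (q₁ q₂ p₁ p₂ : V3) :
    isotropy (q₁, q₂, p₁, p₂) = fixingRotations q₁ (Submodule.span ℝ {p₁, p₂, q₂ - q₁}) := by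
  ext ⟨A, a⟩
  simp only [isotropy, fixingRotations, act, Set.mem_ofPred_eq, Prod.mk.injEq,
    forall_mem_span_mulVec_eq_self, Set.mem_insert_iff, Set.mem_singleton_iff,
    forall_eq_or_imp, forall_eq, mulVec_sub]
  constructor
  · rintro ⟨hA, h₁, h₂, hp₁, hp₂⟩
    exact ⟨hA, ⟨hp₁, hp₂, by linear_combination (norm := module) h₂ - h₁⟩,
      by linear_combination (norm := module) h₁⟩
  · rintro ⟨hA, ⟨hp₁, hp₂, hq⟩, rfl⟩
    exact ⟨hA, by abel, by linear_combination (norm := module) hq, hp₁, hp₂⟩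

lemma fixingRotations_bot (x : V3) : fixingRotations x ⊥ = G1 x := by
  ext ⟨A, a⟩
  simp [fixingRotations, G1]

lemma fixingRotations_span_singleton (x y : V3) : fixingRotations x (ℝ ∙ y) = G3 x y := by
  ext ⟨A, a⟩
  simp [fixingRotations, G3, forall_mem_span_mulVec_eq_self]

lemma G3_eq_G2 {x y : V3} (hx : x ∈ ℝ ∙ y) : G3 x y = G2 y := by
  obtain ⟨c, rfl⟩ := Submodule.mem_span_singleton.mp hx
  ext ⟨A, a⟩
  simp only [G3, G2, Set.mem_ofPred_eq]
  refine and_congr_right fun _ => and_congr_right fun hy => ?_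
  rw [mulVec_smul, hy, sub_self]

lemma fixingRotations_eq_G4 {x u v : V3} {W : Submodule ℝ V3} (hu : u ∈ W) (hv : v ∈ W)
    (huv : u ⨯₃ v ≠ 0) : fixingRotations x W = G4 := by
  ext ⟨A, a⟩
  simp only [fixingRotations, G4, Set.mem_ofPred_eq, Set.mem_singleton_iff, Prod.mk.injEq]
  constructor
  · rintro ⟨hA, hW, rfl⟩
    obtain rfl := hA.eq_one_of_mulVec_eq_self (hW u hu) (hW v hv) huv
    simp
  · rintro ⟨rfl, rfl⟩
    exact ⟨⟨by simp, by simp⟩, fun w _ => one_mulVec w, by simp⟩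

theorem stmt0 (m : M2B) :
    (∃ x : V3, isotropy m = G1 x) ∨
    (∃ y : V3, y ≠ 0 ∧ isotropy m = G2 y) ∨
    (∃ x y : V3, x ⨯₃ y ≠ 0 ∧ isotropy m = G3 x y) ∨
    isotropy m = G4 := by
  obtain ⟨q₁, q₂, p₁, p₂⟩ := m
  rw [isotropy_eq_fixingRotations]
  rcases (Submodule.span ℝ {p₁, p₂, q₂ - q₁}).eq_bot_or_eq_span_singleton_or_exists_cross_ne_zero
    with hW | ⟨y, hy, hW⟩ | ⟨u, hu, v, hv, huv⟩
  · exact Or.inl ⟨q₁, by rw [hW, fixingRotations_bot]⟩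
  · rw [hW, fixingRotations_span_singleton]
    by_cases hq : q₁ ⨯₃ y = 0
    · have hq' : y ⨯₃ q₁ = 0 := by rw [← cross_anticomm, hq, neg_zero]
      exact Or.inr (Or.inl ⟨y, hy, G3_eq_G2 (mem_span_singleton_of_cross_eq_zero hy hq')⟩)
    · exact Or.inr (Or.inr (Or.inl ⟨q₁, y, hq, rfl⟩))
  · exact Or.inr (Or.inr (Or.inr (fixingRotations_eq_G4 hu hv huv)))
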